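/- arXiv:1305.0057 — 2 statements merged into one kernel-verified Lean document; each statement's English description precedes it below -/
import Mathlib

section
/- Let Φ be a reduced root system with a fixed base Π, and let π be the quotient map from ZΦ to ZΦ/⟨Π∖J⟩ for a subset J ⊆ Π. Then for any element α in π(Φ)∖{0} and any irreducible component Φ° of Φ, the set Φ° ∩ π⁻¹(α) contains a unique maximal root with respect to Π (i.e., a unique root a in the set such that a+b is not in the set for any simple root b ∈ Π). -/
open scoped RealInnerProductSpace

/-- A reduced root system `Φ` with a fixed base (system of simple roots) `base`
in a real inner product space. -/
structure RootSystemData (V : Type) [NormedAddCommGroup V] [InnerProductSpace ℝ V] where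
  Φ : Set V
  base : Finset V
  finite : Φ.Finite
  zero_notMem : (0:V) ∉ Φ
  neg_mem : ∀ a ∈ Φ, -a ∈ Φ
  reduced : ∀ a ∈ Φ, ∀ t : ℝ, t • a ∈ Φ → t = 1 ∨ t = -1
  reflect_mem : ∀ a ∈ Φ, ∀ b ∈ Φ, b - (2 * (inner ℝ a b : ℝ) / (inner ℝ a a : ℝ)) • a ∈ Φ
  cartan_int : ∀ a ∈ Φ, ∀ b ∈ Φ, ∃ n : ℤ, 2 * (inner ℝ a b : ℝ) / (inner ℝ a a : ℝ) = (n : ℝ)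
  base_sub : ↑base ⊆ Φ
  base_indep : LinearIndependent ℝ (fun b : base => (b : V))
  base_gen : ∀ a ∈ Φ,
    (∃ c : V → ℕ, a = ∑ b ∈ base, c b • b) ∨ (∃ c : V → ℕ, -a = ∑ b ∈ base, c b • b)

namespace RootSystemData

variable {V : Type} [NormedAddCommGroup V] [InnerProductSpace ℝ V] (RS : RootSystemData V)

/-- `a` is a nonnegative integral combination of the simple roots. -/
def IsPos (a : V) : Prop := ∃ c : V → ℕ, a = ∑ b ∈ RS.base, c b • b

/-- The quotient space `V / ⟨Π ∖ J⟩`, ambient space of the relative roots. -/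
abbrev Qspace (J : Finset V) : Type :=
  V ⧸ Submodule.span ℝ ((RS.base : Set V) \ (J : Set V))

/-- The canonical projection `π : V → V / ⟨Π ∖ J⟩`. -/
def proj (J : Finset V) : V →ₗ[ℝ] RS.Qspace J :=
  Submodule.mkQ _

/-- The set of relative roots `Φ_J = π(Φ) ∖ {0}`. -/
def relRoots (J : Finset V) : Set (RS.Qspace J) := (RS.proj J '' RS.Φ) \ {0}

/-- `β` is a simple relative root: a nonzero image of a simple root in `J`. -/
def IsSimpleRel (J : Finset V) (β : RS.Qspace J) : Prop :=
  β ≠ 0 ∧ ∃ b ∈ J, β = RS.proj J b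

/-- `β` is a positive relative root: a relative root that is a nonnegative
integral combination of the simple relative roots. -/
def IsPosRel (J : Finset V) (β : RS.Qspace J) : Prop :=
  β ∈ RS.relRoots J ∧ ∃ c : V → ℕ, β = ∑ b ∈ J, c b • RS.proj J b

/-- `a` is maximal in `S` with respect to the base `Π`. -/
def IsMaximalIn (S : Set V) (a : V) : Prop := a ∈ S ∧ ∀ b ∈ RS.base, a + b ∉ S

/-- `a` is minimal in `S` with respect to the base `Π`. -/
def IsMinimalIn (S : Set V) (a : V) : Prop := a ∈ S ∧ ∀ b ∈ RS.base, a - b ∉ S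

/-- `a` is the highest root: every root is obtained from it by subtracting a
nonnegative combination of simple roots. -/
def IsHighest (a : V) : Prop :=
  a ∈ RS.Φ ∧ ∀ b ∈ RS.Φ, ∃ c : V → ℕ, a - b = ∑ x ∈ RS.base, c x • x

/-- `S` is an irreducible component of `Φ`: a nonempty subset orthogonal to its
complement admitting no further nontrivial orthogonal splitting. -/
def IsComponent (S : Set V) : Prop :=
  S ⊆ RS.Φ ∧ S.Nonempty ∧ (∀ a ∈ S, ∀ b ∈ RS.Φ \ S, (inner ℝ a b : ℝ) = 0) ∧
    ∀ T ⊆ S, T.Nonempty → (∀ a ∈ T, ∀ b ∈ RS.Φ \ T, (inner ℝ a b : ℝ) = 0) → T = S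

/-- The root system is irreducible. -/
def Irred : Prop := RS.IsComponent RS.Φ

end RootSystemData

/-!
Elements of `F = Φ° ∩ π⁻¹(α)` differ by integral combinations of the simple roots
`Δ = Π ∖ J`, and `π` kills `Δ`, so for `x ∈ F` and `b ∈ Δ` with `⟪x, b⟫ > 0` also `x - b ∈ F`;
in particular a maximal `a ∈ F` is dominant: `⟪a, b⟫ ≥ 0` for `b ∈ Δ`. Given two maximal
`a ≠ a'`, write `a - a' = P - N` with `P`, `N` nonnegative combinations of `Δ` of disjoint
supports and `w = a - P = a' - N`. Then `w ≠ 0` since `π w = α`, and dominance together with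
`⟪b, b'⟫ ≤ 0` for distinct simple roots gives `⟪a, a'⟫ ≥ ⟪w, w⟫ > 0`, so `a - a' = P - N` is a root,
hence `P = 0` or `N = 0`. If, say, `a' = a + N` with `N ≠ 0`, descending from `a'` along
simple roots `b ∈ N` with `⟪·, b⟫ > 0` stays in `F` and ends at some `a + b ∈ F`,
contradicting maximality of `a`.
-/

theorem LinearIndepOn.exists_linearMap_eq {K E F : Type*} [Field K] [AddCommGroup E]
    [Module K E] [AddCommGroup F] [Module K F] {s : Set E} (hs : LinearIndepOn K id s)
    (g : E → F) : ∃ f : E →ₗ[K] F, ∀ x ∈ s, f x = g x := by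
  let B := Module.Basis.extend hs
  refine ⟨B.constr K fun i => g i, fun x hx => ?_⟩
  have hB : B ⟨x, hs.subset_extend _ hx⟩ = x := Module.Basis.extend_apply_self hs _
  simpa [hB] using B.constr_basis K (fun i => g i) ⟨x, hs.subset_extend _ hx⟩

namespace Multiset

theorem disjoint_sub_sub {α : Type*} [DecidableEq α] (s t : Multiset α) :
    Disjoint (s - t) (t - s) := by
  rw [Multiset.disjoint_left]
  intro a hs ht
  rw [← Multiset.count_pos, Multiset.count_sub] at hs ht
  omega

theorem sum_sub_sum_eq {G : Type*} [AddCommGroup G] [DecidableEq G] (s t : Multiset G) :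
    s.sum - t.sum = (s - t).sum - (t - s).sum := by
  have hs := congrArg Multiset.sum (Multiset.sub_add_inter s t)
  have ht := congrArg Multiset.sum (Multiset.sub_add_inter t s)
  rw [Multiset.sum_add] at hs ht
  rw [← hs, ← ht, Multiset.inter_comm t s]
  abel

end Multiset

section InnerMultisetSum

variable {E : Type*} [NormedAddCommGroup E] [InnerProductSpace ℝ E]

theorem real_inner_multiset_sum (x : E) (M : Multiset E) :
    ⟪x, M.sum⟫ = (M.map (⟪x, ·⟫)).sum :=
  map_multiset_sum (innerₗ E x) M

theorem real_inner_multiset_sum_nonneg {x : E} {M : Multiset E} (h : ∀ b ∈ M, 0 ≤ ⟪x, b⟫) :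
    0 ≤ ⟪x, M.sum⟫ := by
  rw [real_inner_multiset_sum]
  exact Multiset.sum_nonneg (by simpa using h)

theorem exists_mem_real_inner_pos_of_multiset_sum {x : E} {M : Multiset E}
    (h : 0 < ⟪x, M.sum⟫) : ∃ b ∈ M, 0 < ⟪x, b⟫ := by
  by_contra! hM
  rw [real_inner_multiset_sum] at h
  have := Multiset.sum_le_card_nsmul (M.map (⟪x, ·⟫)) 0 (by simpa using hM)
  simp only [smul_zero] at this
  linarith

end InnerMultisetSum

namespace RootSystemData

variable {V : Type} [NormedAddCommGroup V] [InnerProductSpace ℝ V] (RS : RootSystemData V)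

theorem ne_zero_of_mem {x : V} (hx : x ∈ RS.Φ) : x ≠ 0 := by
  rintro rfl
  exact RS.zero_notMem hx

theorem inner_mul_inner_lt {a b : V} (ha : a ∈ RS.Φ) (hb : b ∈ RS.Φ) (hab : 0 < ⟪a, b⟫)
    (hne : a ≠ b) : ⟪a, b⟫ * ⟪a, b⟫ < ⟪a, a⟫ * ⟪b, b⟫ := by
  refine (real_inner_mul_inner_self_le a b).lt_of_ne fun heq => hne ?_
  have hnorm : ⟪a, b⟫ = ‖a‖ * ‖b‖ := by
    rw [real_inner_self_eq_norm_mul_norm, real_inner_self_eq_norm_mul_norm] at heq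
    nlinarith [norm_nonneg a, norm_nonneg b, mul_nonneg (norm_nonneg a) (norm_nonneg b)]
  have ha0 : ‖a‖ ≠ 0 := norm_ne_zero_iff.2 (RS.ne_zero_of_mem ha)
  have hba : b = (‖b‖ / ‖a‖) • a := by
    rw [div_eq_inv_mul, mul_smul, inner_eq_norm_mul_iff_real.1 hnorm, smul_smul,
      inv_mul_cancel₀ ha0, one_smul]
  rcases RS.reduced a ha _ (hba ▸ hb) with h | h
  · rw [hba, h, one_smul]
  · linarith [div_nonneg (norm_nonneg b) (norm_nonneg a)]

theorem sub_mem_of_inner_pos {a b : V} (ha : a ∈ RS.Φ) (hb : b ∈ RS.Φ) (hab : 0 < ⟪a, b⟫)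
    (hne : a ≠ b) : a - b ∈ RS.Φ := by
  obtain ⟨m, hm⟩ := RS.cartan_int a ha b hb
  obtain ⟨n, hn⟩ := RS.cartan_int b hb a ha
  rw [real_inner_comm a b] at hn
  have haa : 0 < ⟪a, a⟫ := real_inner_self_pos.2 (RS.ne_zero_of_mem ha)
  have hbb : 0 < ⟪b, b⟫ := real_inner_self_pos.2 (RS.ne_zero_of_mem hb)
  have hm0 : (0 : ℝ) < m := by rw [← hm]; exact div_pos (by linarith) haa
  have hn0 : (0 : ℝ) < n := by rw [← hn]; exact div_pos (by linarith) hbb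
  -- `m n = 4⟪a, b⟫² / (⟪a, a⟫⟪b, b⟫) < 4` by strict Cauchy–Schwarz
  have hmn : (m : ℝ) * n < 4 := by
    rw [← hm, ← hn, div_mul_div_comm, div_lt_iff₀ (by positivity)]
    nlinarith [RS.inner_mul_inner_lt ha hb hab hne]
  have hm1 : (0 : ℤ) < m := by exact_mod_cast hm0
  have hn1 : (0 : ℤ) < n := by exact_mod_cast hn0
  have hmn' : m * n < 4 := by exact_mod_cast hmn
  have h1 : m = 1 ∨ n = 1 := by
    by_contra! h
    nlinarith [(by omega : 2 ≤ m), (by omega : 2 ≤ n)]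
  rcases h1 with h | h
  · have := RS.neg_mem _ (RS.reflect_mem a ha b hb)
    rwa [hm, h, Int.cast_one, one_smul, neg_sub] at this
  · have := RS.reflect_mem b hb a ha
    rwa [real_inner_comm a b, hn, h, Int.cast_one, one_smul] at this

theorem exists_linearMap_sum_eq_sum_map (g : V → ℝ) : ∃ f : V →ₗ[ℝ] ℝ,
    ∀ M : Multiset V, (∀ b ∈ M, b ∈ RS.base) → f M.sum = (M.map g).sum := by
  obtain ⟨f, hf⟩ := LinearIndepOn.exists_linearMap_eq (s := (RS.base : Set V)) RS.base_indep g
  refine ⟨f, fun M hM => ?_⟩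
  rw [map_multiset_sum]
  exact congrArg _ (Multiset.map_congr rfl fun b hb => hf b (hM b hb))

theorem exists_linearMap_sum_eq_card : ∃ f : V →ₗ[ℝ] ℝ,
    ∀ M : Multiset V, (∀ b ∈ M, b ∈ RS.base) → f M.sum = M.card := by
  obtain ⟨f, hf⟩ := RS.exists_linearMap_sum_eq_sum_map 1
  exact ⟨f, fun M hM => by simp [hf M hM]⟩

theorem exists_linearMap_sum_eq_count [DecidableEq V] (b₀ : V) : ∃ f : V →ₗ[ℝ] ℝ,
    ∀ M : Multiset V, (∀ b ∈ M, b ∈ RS.base) → f M.sum = M.count b₀ := by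
  obtain ⟨f, hf⟩ := RS.exists_linearMap_sum_eq_sum_map fun b => if b = b₀ then 1 else 0
  refine ⟨f, fun M hM => ?_⟩
  rw [hf M hM]
  clear hM
  induction M using Multiset.induction_on with
  | empty => simp
  | cons b M ih =>
    rw [Multiset.map_cons, Multiset.sum_cons, ih, Multiset.count_cons]
    by_cases h : b = b₀
    · subst h
      simp [add_comm]
    · simp [h, Ne.symm h]

theorem sum_ne_zero {M : Multiset V} (hM : ∀ b ∈ M, b ∈ RS.base) (h0 : M ≠ 0) : M.sum ≠ 0 := by
  obtain ⟨f, hf⟩ := RS.exists_linearMap_sum_eq_card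
  intro h
  have := hf M hM
  rw [h, map_zero, eq_comm, Nat.cast_eq_zero, Multiset.card_eq_zero] at this
  exact h0 this

theorem exists_isMaximalIn {T : Set V} (hfin : T.Finite) (hne : T.Nonempty) :
    ∃ a, RS.IsMaximalIn T a := by
  obtain ⟨f, hf⟩ := RS.exists_linearMap_sum_eq_card
  obtain ⟨a, ha, hmax⟩ := hfin.exists_maximalFor f T hne
  refine ⟨a, ha, fun b hb hab => ?_⟩
  have hfb : f b = 1 := by simpa using hf {b} (by simpa using hb)
  have := hmax hab (by rw [map_add, hfb]; linarith)
  rw [map_add, hfb] at this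
  linarith

-- Nonnegative integral combinations of simple roots are encoded as sums of multisets of
-- simple roots.
theorem exists_multiset_of_mem {r : V} (hr : r ∈ RS.Φ) :
    ∃ C : Multiset V, (∀ b ∈ C, b ∈ RS.base) ∧ (r = C.sum ∨ r = -C.sum) := by
  have key (c : V → ℕ) : ∃ C : Multiset V, (∀ b ∈ C, b ∈ RS.base) ∧
      C.sum = ∑ b ∈ RS.base, c b • b := by
    refine ⟨∑ b ∈ RS.base, Multiset.replicate (c b) b, fun b hb => ?_,
      by simp [Multiset.sum_sum]⟩
    obtain ⟨b', hb', hb⟩ := Multiset.mem_sum.1 hb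
    rwa [Multiset.eq_of_mem_replicate hb]
  rcases RS.base_gen r hr with ⟨c, hc⟩ | ⟨c, hc⟩ <;> obtain ⟨C, hC, hsum⟩ := key c
  · exact ⟨C, hC, .inl (hc.trans hsum.symm)⟩
  · exact ⟨C, hC, .inr (by rw [hsum, ← hc, neg_neg])⟩

theorem eq_zero_of_sum_sub_sum_eq_sum {P N C : Multiset V} (hP : ∀ b ∈ P, b ∈ RS.base)
    (hN : ∀ b ∈ N, b ∈ RS.base) (hC : ∀ b ∈ C, b ∈ RS.base) (hPN : Disjoint P N)
    (h : P.sum - N.sum = C.sum) : N = 0 := by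
  classical
  by_contra hN0
  obtain ⟨n, hn⟩ := Multiset.exists_mem_of_ne_zero hN0
  obtain ⟨f, hf⟩ := RS.exists_linearMap_sum_eq_count n
  have hcoord := congrArg f h
  rw [map_sub, hf P hP, hf N hN, hf C hC,
    Multiset.count_eq_zero.2 (Multiset.disjoint_right.1 hPN hn)] at hcoord
  have : (0 : ℝ) < N.count n := by exact_mod_cast Multiset.count_pos.2 hn
  have : (0 : ℝ) ≤ C.count n := Nat.cast_nonneg _
  simp only [CharP.cast_eq_zero, zero_sub] at hcoord
  linarith

theorem eq_zero_or_eq_zero_of_sum_sub_sum_mem {P N : Multiset V} (hP : ∀ b ∈ P, b ∈ RS.base)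
    (hN : ∀ b ∈ N, b ∈ RS.base) (hPN : Disjoint P N) (hr : P.sum - N.sum ∈ RS.Φ) :
    P = 0 ∨ N = 0 := by
  obtain ⟨C, hC, hr | hr⟩ := RS.exists_multiset_of_mem hr
  · exact .inr (RS.eq_zero_of_sum_sub_sum_eq_sum hP hN hC hPN hr)
  · refine .inl (RS.eq_zero_of_sum_sub_sum_eq_sum hN hP hC hPN.symm ?_)
    rw [← neg_sub, hr, neg_neg]

theorem inner_nonpos_of_ne {b b' : V} (hb : b ∈ RS.base) (hb' : b' ∈ RS.base) (hne : b ≠ b') :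
    ⟪b, b'⟫ ≤ 0 := by
  by_contra! h
  have hr : ({b} : Multiset V).sum - ({b'} : Multiset V).sum ∈ RS.Φ := by
    simpa using RS.sub_mem_of_inner_pos (RS.base_sub hb) (RS.base_sub hb') h hne
  simpa using RS.eq_zero_or_eq_zero_of_sum_sub_sum_mem (by simpa) (by simpa)
    (by simpa using hne.symm) hr

theorem sum_inner_nonpos {P : Multiset V} (hP : ∀ b ∈ P, b ∈ RS.base) {b : V}
    (hb : b ∈ RS.base) (hbP : b ∉ P) : ⟪P.sum, b⟫ ≤ 0 := by
  by_contra! h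
  rw [real_inner_comm] at h
  obtain ⟨b', hb', hpos⟩ := exists_mem_real_inner_pos_of_multiset_sum h
  exact (RS.inner_nonpos_of_ne hb (hP b' hb') (by rintro rfl; exact hbP hb')).not_gt hpos

theorem sum_inner_sum_nonpos {P N : Multiset V} (hP : ∀ b ∈ P, b ∈ RS.base)
    (hN : ∀ b ∈ N, b ∈ RS.base) (hPN : Disjoint P N) : ⟪P.sum, N.sum⟫ ≤ 0 := by
  by_contra! h
  obtain ⟨b, hb, hpos⟩ := exists_mem_real_inner_pos_of_multiset_sum h
  exact (RS.sum_inner_nonpos hP (hN b hb) (Multiset.disjoint_right.1 hPN hb)).not_gt hpos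

theorem proj_eq_zero {J : Finset V} {b : V} (hb : b ∈ (RS.base : Set V) \ J) :
    RS.proj J b = 0 := by
  rw [proj, Submodule.mkQ_apply, Submodule.Quotient.mk_eq_zero]
  exact Submodule.subset_span hb

theorem proj_sum_eq_zero {J : Finset V} {M : Multiset V}
    (hM : ∀ b ∈ M, b ∈ (RS.base : Set V) \ J) : RS.proj J M.sum = 0 := by
  rw [map_multiset_sum]
  exact Multiset.sum_eq_zero fun x hx => by
    obtain ⟨b, hb, rfl⟩ := Multiset.mem_map.1 hx
    exact RS.proj_eq_zero (hM b hb)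

theorem count_eq_of_proj_sum_eq [DecidableEq V] {J : Finset V} {P N : Multiset V}
    (hP : ∀ b ∈ P, b ∈ RS.base) (hN : ∀ b ∈ N, b ∈ RS.base)
    (h : RS.proj J P.sum = RS.proj J N.sum) {b : V} (hb : b ∈ J) : P.count b = N.count b := by
  obtain ⟨f, hf⟩ := RS.exists_linearMap_sum_eq_count b
  have hker : Submodule.span ℝ ((RS.base : Set V) \ (J : Set V)) ≤ LinearMap.ker f :=
    Submodule.span_le.2 fun c ⟨hc, hcJ⟩ => by
      have hbc : b ≠ c := by rintro rfl; exact hcJ hb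
      simpa [Multiset.count_singleton, hbc] using hf {c} (by simpa using hc)
  have hsub : f (P.sum - N.sum) = 0 := hker <| by
    rwa [← sub_eq_zero, ← map_sub, proj, Submodule.mkQ_apply,
      Submodule.Quotient.mk_eq_zero] at h
  rw [map_sub, hf P hP, hf N hN, sub_eq_zero] at hsub
  exact_mod_cast hsub

theorem exists_sub_eq_sum_sub_sum {a a' : V} (ha : a ∈ RS.Φ) (ha' : a' ∈ RS.Φ) :
    ∃ X Y : Multiset V, (∀ b ∈ X, b ∈ RS.base) ∧ (∀ b ∈ Y, b ∈ RS.base) ∧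
      a - a' = X.sum - Y.sum := by
  have hroot {r : V} (hr : r ∈ RS.Φ) : ∃ A B : Multiset V, (∀ b ∈ A, b ∈ RS.base) ∧
      (∀ b ∈ B, b ∈ RS.base) ∧ r = A.sum - B.sum := by
    obtain ⟨C, hC, hr | hr⟩ := RS.exists_multiset_of_mem hr
    · exact ⟨C, 0, hC, by simp, by simpa using hr⟩
    · exact ⟨0, C, by simp, hC, by simpa using hr⟩
  obtain ⟨A, B, hA, hB, rfl⟩ := hroot ha
  obtain ⟨A', B', hA', hB', rfl⟩ := hroot ha'
  refine ⟨A + B', B + A', fun b hb => (Multiset.mem_add.1 hb).elim (hA b) (hB' b),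
    fun b hb => (Multiset.mem_add.1 hb).elim (hB b) (hA' b), ?_⟩
  simp only [Multiset.sum_add]
  abel

theorem exists_sub_eq_sum_sub_sum_of_proj_eq {J : Finset V} {a a' : V} (ha : a ∈ RS.Φ)
    (ha' : a' ∈ RS.Φ) (h : RS.proj J a = RS.proj J a') :
    ∃ P N : Multiset V, (∀ b ∈ P, b ∈ (RS.base : Set V) \ J) ∧
      (∀ b ∈ N, b ∈ (RS.base : Set V) \ J) ∧ Disjoint P N ∧ a - a' = P.sum - N.sum := by
  classical
  obtain ⟨X, Y, hX, hY, hXY⟩ := RS.exists_sub_eq_sum_sub_sum ha ha'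
  have hcount : ∀ b ∈ J, X.count b = Y.count b := fun b hb =>
    RS.count_eq_of_proj_sum_eq hX hY
      (by rw [← sub_eq_zero, ← map_sub, ← hXY, map_sub, h, sub_self]) hb
  have hsub {X Y : Multiset V} (hX : ∀ b ∈ X, b ∈ RS.base)
      (hc : ∀ b ∈ J, X.count b = Y.count b) : ∀ b ∈ X - Y, b ∈ (RS.base : Set V) \ J := by
    intro b hb
    refine ⟨hX b (Multiset.mem_of_le (Multiset.sub_le_self X Y) hb), fun hbJ => ?_⟩
    rw [← Multiset.count_pos, Multiset.count_sub, hc b hbJ] at hb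
    omega
  exact ⟨X - Y, Y - X, hsub hX hcount, hsub hY fun b hb => (hcount b hb).symm,
    Multiset.disjoint_sub_sub X Y, hXY.trans (Multiset.sum_sub_sum_eq X Y)⟩

theorem inner_add_sum_add_sum_pos {w : V} (hw : w ≠ 0) {P N : Multiset V}
    (hP : ∀ b ∈ P, b ∈ RS.base) (hN : ∀ b ∈ N, b ∈ RS.base) (hPN : Disjoint P N)
    (hwP : ∀ b ∈ N, 0 ≤ ⟪w + P.sum, b⟫) (hwN : ∀ b ∈ P, 0 ≤ ⟪w + N.sum, b⟫) :
    0 < ⟪w + P.sum, w + N.sum⟫ := by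
  have h1 := real_inner_multiset_sum_nonneg hwP
  have h2 := real_inner_multiset_sum_nonneg hwN
  have h3 := RS.sum_inner_sum_nonpos hP hN hPN
  have h4 : 0 < ⟪w, w⟫ := real_inner_self_pos.2 hw
  rw [real_inner_comm] at h2
  simp only [inner_add_left, inner_add_right] at h1 h2 ⊢
  linarith

variable {RS}

theorem IsComponent.mem_of_inner_ne_zero {S : Set V} (hS : RS.IsComponent S) {x y : V}
    (hx : x ∈ S) (hy : y ∈ RS.Φ) (hxy : ⟪x, y⟫ ≠ 0) : y ∈ S := by
  by_contra h
  exact hxy (hS.2.2.1 x hx y ⟨hy, h⟩)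

theorem IsComponent.add_mem {S : Set V} (hS : RS.IsComponent S) {x y : V} (hx : x ∈ S)
    (hy : y ∈ S) (hxy : x + y ∈ RS.Φ) : x + y ∈ S := by
  by_contra h
  have hx' := hS.2.2.1 x hx _ ⟨hxy, h⟩
  have hy' := hS.2.2.1 y hy _ ⟨hxy, h⟩
  refine RS.ne_zero_of_mem hxy ((inner_self_eq_zero (𝕜 := ℝ)).1 ?_)
  rw [inner_add_left, hx', hy', add_zero]

section Fiber

variable {J : Finset V} {α : RS.Qspace J} {S : Set V}

theorem sub_mem_fiber (hα : α ≠ 0) (hS : RS.IsComponent S) {x b : V}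
    (hx : x ∈ S ∩ RS.proj J ⁻¹' {α}) (hb : b ∈ RS.Φ) (hpb : RS.proj J b = 0)
    (hxb : 0 < ⟪x, b⟫) : x - b ∈ S ∩ RS.proj J ⁻¹' {α} := by
  obtain ⟨hxS, hpx⟩ := hx
  have hpx : RS.proj J x = α := hpx
  have hne : x ≠ b := by
    rintro rfl
    exact hα (hpx ▸ hpb)
  have hnegb : -b ∈ S :=
    hS.mem_of_inner_ne_zero hxS (RS.neg_mem b hb) (by rw [inner_neg_right]; linarith)
  refine ⟨?_, by simp [hpx, hpb]⟩
  have hsub := RS.sub_mem_of_inner_pos (hS.1 hxS) hb hxb hne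
  rw [sub_eq_add_neg] at hsub ⊢
  exact hS.add_mem hxS hnegb hsub

theorem IsMaximalIn.inner_nonneg (hα : α ≠ 0) (hS : RS.IsComponent S) {a : V}
    (ha : RS.IsMaximalIn (S ∩ RS.proj J ⁻¹' {α}) a) {b : V} (hb : b ∈ (RS.base : Set V) \ J) :
    0 ≤ ⟪a, b⟫ := by
  by_contra! h
  have hbase : b ∈ RS.base := hb.1
  have := sub_mem_fiber hα hS ha.1 (RS.neg_mem b (RS.base_sub hbase))
    (by rw [map_neg, RS.proj_eq_zero hb, neg_zero]) (by rw [inner_neg_right]; linarith)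
  exact ha.2 b hbase (by rwa [sub_neg_eq_add] at this)

theorem exists_add_mem_of_add_sum_mem (hα : α ≠ 0) (hS : RS.IsComponent S) {w : V}
    {N : Multiset V} (hN : ∀ b ∈ N, b ∈ (RS.base : Set V) \ J) (hw : ∀ b ∈ N, 0 ≤ ⟪w, b⟫)
    (hN0 : N ≠ 0) (hx : w + N.sum ∈ S ∩ RS.proj J ⁻¹' {α}) :
    ∃ b ∈ N, w + b ∈ S ∩ RS.proj J ⁻¹' {α} := by
  classical
  induction N using Multiset.strongInductionOn with
  | ih N ih =>
  have hpos : 0 < ⟪w + N.sum, N.sum⟫ := by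
    have h1 := real_inner_multiset_sum_nonneg hw
    have h2 := real_inner_self_pos.2 (RS.sum_ne_zero (fun b hb => (hN b hb).1) hN0)
    rw [inner_add_left]
    linarith
  obtain ⟨b, hbN, hxb⟩ := exists_mem_real_inner_pos_of_multiset_sum hpos
  rw [← Multiset.sum_erase hbN] at hx hxb
  by_cases hN1 : N.erase b = 0
  · rw [hN1, Multiset.sum_zero, add_zero] at hx
    exact ⟨b, hbN, hx⟩
  have hx' : w + (N.erase b).sum ∈ S ∩ RS.proj J ⁻¹' {α} := by
    have := sub_mem_fiber hα hS hx (RS.base_sub (hN b hbN).1) (RS.proj_eq_zero (hN b hbN))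
      hxb
    rwa [add_left_comm, add_sub_cancel_left] at this
  obtain ⟨b', hb', hwb'⟩ := ih _ (Multiset.erase_lt.2 hbN)
    (fun b' hb' => hN b' (Multiset.mem_of_mem_erase hb'))
    (fun b' hb' => hw b' (Multiset.mem_of_mem_erase hb')) hN1 hx'
  exact ⟨b', Multiset.mem_of_mem_erase hb', hwb'⟩

theorem IsMaximalIn.add_sum_notMem (hα : α ≠ 0) (hS : RS.IsComponent S) {a : V}
    (ha : RS.IsMaximalIn (S ∩ RS.proj J ⁻¹' {α}) a) {N : Multiset V}
    (hN : ∀ b ∈ N, b ∈ (RS.base : Set V) \ J) (hN0 : N ≠ 0) :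
    a + N.sum ∉ S ∩ RS.proj J ⁻¹' {α} := fun hx => by
  obtain ⟨b, hbN, hab⟩ := exists_add_mem_of_add_sum_mem hα hS hN
    (fun b hb => ha.inner_nonneg hα hS (hN b hb)) hN0 hx
  exact ha.2 b (hN b hbN).1 hab

theorem IsMaximalIn.eq (hα : α ≠ 0) (hS : RS.IsComponent S) {a a' : V}
    (ha : RS.IsMaximalIn (S ∩ RS.proj J ⁻¹' {α}) a)
    (ha' : RS.IsMaximalIn (S ∩ RS.proj J ⁻¹' {α}) a') : a = a' := by
  by_contra hne
  have hroot := hS.1 ha.1.1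
  have hroot' := hS.1 ha'.1.1
  obtain ⟨P, N, hP, hN, hPN, hsub⟩ :=
    RS.exists_sub_eq_sum_sub_sum_of_proj_eq hroot hroot' (ha.1.2.trans ha'.1.2.symm)
  have hPbase : ∀ b ∈ P, b ∈ RS.base := fun b hb => (hP b hb).1
  have hNbase : ∀ b ∈ N, b ∈ RS.base := fun b hb => (hN b hb).1
  obtain ⟨w, hw⟩ : ∃ w, w = a - P.sum := ⟨_, rfl⟩
  have haw : a = w + P.sum := by rw [hw, sub_add_cancel]
  have ha'w : a' = w + N.sum := by
    rw [hw, sub_add, ← hsub, sub_sub_cancel]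
  have hw0 : w ≠ 0 := fun h0 => hα <| by
    rw [← ha.1.2, haw, h0, zero_add, RS.proj_sum_eq_zero hP]
  have hinner : 0 < ⟪a, a'⟫ := by
    rw [haw, ha'w]
    refine RS.inner_add_sum_add_sum_pos hw0 hPbase hNbase hPN (fun b hb => ?_) (fun b hb => ?_)
    · exact haw ▸ ha.inner_nonneg hα hS (hN b hb)
    · exact ha'w ▸ ha'.inner_nonneg hα hS (hP b hb)
  rcases RS.eq_zero_or_eq_zero_of_sum_sub_sum_mem hPbase hNbase hPN
      (hsub ▸ RS.sub_mem_of_inner_pos hroot hroot' hinner hne) with rfl | rfl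
  · have h' : a' = a + N.sum := by
      rw [← sub_eq_iff_eq_add', ← neg_sub, hsub, Multiset.sum_zero, zero_sub, neg_neg]
    refine ha.add_sum_notMem hα hS hN ?_ (h' ▸ ha'.1)
    rintro rfl
    exact hne (by simpa using h'.symm)
  · have h' : a = a' + P.sum := by
      rw [← sub_eq_iff_eq_add', hsub, Multiset.sum_zero, sub_zero]
    refine ha'.add_sum_notMem hα hS hP ?_ (h' ▸ ha.1)
    rintro rfl
    exact hne (by simpa using h')

end Fiber

end RootSystemData

open RootSystemData in
theorem stmt0_general {V : Type} [NormedAddCommGroup V] [InnerProductSpace ℝ V]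
    (RS : RootSystemData V) (J : Finset V)
    (α : RS.Qspace J) (hα : α ∈ RS.relRoots J)
    (S : Set V) (hS : RS.IsComponent S)
    (hne : (S ∩ RS.proj J ⁻¹' {α}).Nonempty) :
    ∃! a : V, RS.IsMaximalIn (S ∩ RS.proj J ⁻¹' {α}) a := by
  obtain ⟨a, ha⟩ := RS.exists_isMaximalIn (RS.finite.subset fun x hx => hS.1 hx.1) hne
  exact ⟨a, ha, fun a' ha' => (ha.eq hα.2 hS ha').symm⟩

open RootSystemData in
theorem stmt0 {V : Type} [NormedAddCommGroup V] [InnerProductSpace ℝ V]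
    (RS : RootSystemData V) (J : Finset V) (hJ : J ⊆ RS.base)
    (α : RS.Qspace J) (hα : α ∈ RS.relRoots J)
    (S : Set V) (hS : RS.IsComponent S)
    (hne : (S ∩ RS.proj J ⁻¹' {α}).Nonempty) :
    ∃! a : V, RS.IsMaximalIn (S ∩ RS.proj J ⁻¹' {α}) a :=
  stmt0_general RS J α hα S hS hne
end

section
/- Let Φ be a reduced root system with base Π, J ⊆ Π, π the projection modulo ⟨Π∖J⟩, Φ_J = π(Φ)∖{0}. Let α ∈ Φ_J and β a simple relative root linearly independent from α. Fix integers i, j ≥ 1 and let k (respectively l) be the maximal integer with iα + kβ ∈ Φ_J (respectively jα + lβ ∈ Φ_J). Then (jα + lβ) − (iα + kβ) ∈ Φ_J ∪ {0}. -/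
open scoped RealInnerProductSpace

/-!
Represent a relative root `γ` by the barycentre of the roots lying over it. The reflections in
`Π ∖ J` permute those roots, so the barycentre is orthogonal to `⟨Π ∖ J⟩`: it is the
representative of `γ` in `⟨Π ∖ J⟩ᗮ`. Averaging, `⟪γ, π b⟫ < 0` produces a root `x` over `γ`
with `⟪x, b⟫ < 0`, so the criterion "`⟪a, b⟫ < 0` makes `a + b` a root or `0`" descends to
relative roots.

For `γ = iα + kβ` and `δ = jα + lβ`, maximality of `k` and `l` gives `⟪γ, β⟫ ≥ 0` and
`⟪δ, β⟫ ≥ 0`. The Gram identity `⟪γ, δ⟫ ‖β‖² = i j (‖α‖² ‖β‖² - ⟪α, β⟫²) + ⟪γ, β⟫ ⟪δ, β⟫`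
with `i, j > 0` then forces `⟪γ, δ⟫ > 0`, and `δ + (-γ)` is a relative root or `0`.
-/

theorem inner_smul_add_smul_pos {E : Type*} [NormedAddCommGroup E] [InnerProductSpace ℝ E]
    {x z : E} {i j k l : ℝ} (hi : 0 < i) (hj : 0 < j)
    (hk : 0 ≤ ⟪i • x + k • z, z⟫) (hl : 0 ≤ ⟪j • x + l • z, z⟫)
    (hg : i • x + k • z ≠ 0) (hd : j • x + l • z ≠ 0) :
    0 < ⟪i • x + k • z, j • x + l • z⟫ := by
  rcases eq_or_ne z 0 with rfl | hz
  · simp only [smul_zero, add_zero, ne_eq, smul_eq_zero, hi.ne', false_or] at hg ⊢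
    rw [real_inner_smul_left, real_inner_smul_right]
    have := real_inner_self_pos.mpr hg
    positivity
  have hC : 0 < ⟪z, z⟫ := real_inner_self_pos.mpr hz
  set G := ⟪x, x⟫ * ⟪z, z⟫ - ⟪x, z⟫ * ⟪x, z⟫
  have hG : 0 ≤ G := sub_nonneg.mpr (real_inner_mul_inner_self_le x z)
  have expand : ∀ a b c d : ℝ, ⟪a • x + b • z, c • x + d • z⟫ * ⟪z, z⟫ =
      a * c * G + ⟪a • x + b • z, z⟫ * ⟪c • x + d • z, z⟫ := by
    intro a b c d
    simp only [G, inner_add_left, inner_add_right, real_inner_smul_left, real_inner_smul_right,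
      real_inner_comm x z]
    ring
  have egg := expand i k i k
  have edd := expand j l j l
  have egd := expand i k j l
  have hgg := mul_pos (real_inner_self_pos.mpr hg) hC
  have hdd := mul_pos (real_inner_self_pos.mpr hd) hC
  by_contra! hneg
  have hgd : ⟪i • x + k • z, j • x + l • z⟫ * ⟪z, z⟫ ≤ 0 :=
    mul_nonpos_of_nonpos_of_nonneg hneg hC.le
  have hG0 : G = 0 := by nlinarith [mul_pos hi hj, mul_nonneg hk hl]
  rw [hG0, mul_zero, zero_add] at egg edd egd
  rcases mul_eq_zero.mp (le_antisymm (egd ▸ hgd) (mul_nonneg hk hl)) with hp | hq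
  · rw [hp, mul_zero] at egg; linarith
  · rw [hq, mul_zero] at edd; linarith

namespace RootSystemData

variable {V : Type} [NormedAddCommGroup V] [InnerProductSpace ℝ V] (RS : RootSystemData V)

lemma ne_zero_of_mem_s4 {a : V} (ha : a ∈ RS.Φ) : a ≠ 0 :=
  fun h => RS.zero_notMem (h ▸ ha)

lemma add_mem_of_cartan_eq_neg_one {a b : V} (ha : a ∈ RS.Φ) (hb : b ∈ RS.Φ)
    (h : 2 * ⟪a, b⟫ / ⟪a, a⟫ = -1) : a + b ∈ RS.Φ := by
  have := RS.reflect_mem a ha b hb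
  rwa [h, neg_one_smul, sub_neg_eq_add, add_comm] at this

lemma add_mem_of_inner_neg {a b : V} (ha : a ∈ RS.Φ) (hb : b ∈ RS.Φ)
    (hab : ⟪a, b⟫ < 0) (hne : a + b ≠ 0) : a + b ∈ RS.Φ := by
  have haa : 0 < ⟪a, a⟫ := real_inner_self_pos.mpr (RS.ne_zero_of_mem_s4 ha)
  have hbb : 0 < ⟪b, b⟫ := real_inner_self_pos.mpr (RS.ne_zero_of_mem_s4 hb)
  obtain ⟨n, hn⟩ := RS.cartan_int a ha b hb
  obtain ⟨m, hm⟩ := RS.cartan_int b hb a ha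
  rw [real_inner_comm] at hm
  have hn' : 2 * ⟪a, b⟫ = n * ⟪a, a⟫ := by rw [← hn]; field_simp
  have hm' : 2 * ⟪a, b⟫ = m * ⟪b, b⟫ := by rw [← hm]; field_simp
  have hn0 : n < 0 := by
    have : (n : ℝ) < 0 := by nlinarith
    exact_mod_cast this
  have hm0 : m < 0 := by
    have : (m : ℝ) < 0 := by nlinarith
    exact_mod_cast this
  rcases (show n = -1 ∨ n ≤ -2 by omega) with rfl | hn2
  · exact RS.add_mem_of_cartan_eq_neg_one ha hb (by simpa using hn)
  rcases (show m = -1 ∨ m ≤ -2 by omega) with rfl | hm2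
  · rw [add_comm]
    exact RS.add_mem_of_cartan_eq_neg_one hb ha (by rw [real_inner_comm]; simpa using hm)
  -- both Cartan integers `≤ -2` force `‖a + b‖² ≤ 0`
  have hn2' : (n : ℝ) ≤ -2 := by exact_mod_cast hn2
  have hm2' : (m : ℝ) ≤ -2 := by exact_mod_cast hm2
  refine absurd (inner_self_eq_zero.mp (le_antisymm ?_ real_inner_self_nonneg)) hne
  rw [real_inner_add_add_self]
  nlinarith

lemma inner_reflection_orthogonal_singleton (c x : V) :
    ⟪c, (ℝ ∙ c)ᗮ.reflection x⟫ = -⟪c, x⟫ := by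
  set R := (ℝ ∙ c)ᗮ.reflection
  calc ⟪c, R x⟫ = ⟪R c, R (R x)⟫ := (R.inner_map_map c (R x)).symm
    _ = -⟪c, x⟫ := by
      rw [Submodule.reflection_orthogonalComplement_singleton_eq_neg,
        Submodule.reflection_reflection, inner_neg_left]

lemma reflection_orthogonal_singleton_apply (c x : V) :
    (ℝ ∙ c)ᗮ.reflection x = x - (2 * ⟪c, x⟫ / ⟪c, c⟫) • c := by
  rw [Submodule.reflection_orthogonal_apply, Submodule.reflection_singleton_apply,
    real_inner_self_eq_norm_sq]
  simp only [RCLike.ofReal_real_eq_id, id, two_smul]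
  module

lemma reflection_mem {c x : V} (hc : c ∈ RS.Φ) (hx : x ∈ RS.Φ) :
    (ℝ ∙ c)ᗮ.reflection x ∈ RS.Φ := by
  rw [reflection_orthogonal_singleton_apply]
  exact RS.reflect_mem c hc x hx

/-- `⟨Π ∖ J⟩`, the kernel of `π`. -/
abbrev leviSpan (J : Finset V) : Submodule ℝ V :=
  Submodule.span ℝ ((RS.base : Set V) \ (J : Set V))

variable {RS} {J : Finset V}

lemma proj_eq_proj_iff {v w : V} : RS.proj J v = RS.proj J w ↔ v - w ∈ RS.leviSpan J :=
  Submodule.Quotient.eq _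

lemma eq_of_proj_eq_of_mem_orthogonal {v w : V} (h : RS.proj J v = RS.proj J w)
    (hv : v ∈ (RS.leviSpan J)ᗮ) (hw : w ∈ (RS.leviSpan J)ᗮ) : v = w := by
  have hvw : v - w ∈ RS.leviSpan J ⊓ (RS.leviSpan J)ᗮ :=
    ⟨proj_eq_proj_iff.mp h, Submodule.sub_mem _ hv hw⟩
  rwa [Submodule.inf_orthogonal_eq_bot, Submodule.mem_bot, sub_eq_zero] at hvw

variable (RS J)

noncomputable def fiber (γ : RS.Qspace J) : Finset V :=
  (RS.finite.sep fun x => RS.proj J x = γ).toFinset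

variable {RS J}

@[simp] lemma mem_fiber {γ : RS.Qspace J} {x : V} :
    x ∈ RS.fiber J γ ↔ x ∈ RS.Φ ∧ RS.proj J x = γ := by
  simp [fiber]

lemma reflection_mem_fiber {γ : RS.Qspace J} {c x : V}
    (hc : c ∈ (RS.base : Set V) \ (J : Set V)) (hx : x ∈ RS.fiber J γ) :
    (ℝ ∙ c)ᗮ.reflection x ∈ RS.fiber J γ := by
  rw [mem_fiber] at hx ⊢
  refine ⟨RS.reflection_mem (RS.base_sub hc.1) hx.1, hx.2 ▸ proj_eq_proj_iff.mpr ?_⟩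
  rw [reflection_orthogonal_singleton_apply, sub_sub_cancel_left]
  exact Submodule.neg_mem _ (Submodule.smul_mem _ _ (Submodule.subset_span hc))

lemma sum_inner_fiber_eq_zero (γ : RS.Qspace J) {c : V}
    (hc : c ∈ (RS.base : Set V) \ (J : Set V)) : ∑ x ∈ RS.fiber J γ, ⟪c, x⟫ = 0 := by
  refine Finset.sum_involution (fun x _ => (ℝ ∙ c)ᗮ.reflection x) ?_ ?_
    (fun x hx => reflection_mem_fiber hc hx) (fun x _ => Submodule.reflection_reflection _ x)
  · intro x _
    rw [inner_reflection_orthogonal_singleton, add_neg_cancel]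
  · intro x _ hx hfix
    have hneg := inner_reflection_orthogonal_singleton c x
    rw [hfix] at hneg
    exact hx (by linarith)

variable (RS J)

noncomputable def fiberMean (γ : RS.Qspace J) : V :=
  ((RS.fiber J γ).card : ℝ)⁻¹ • ∑ x ∈ RS.fiber J γ, x

variable {RS J}

lemma fiber_nonempty {γ : RS.Qspace J} (hγ : γ ∈ RS.relRoots J) : (RS.fiber J γ).Nonempty := by
  obtain ⟨⟨a, ha, rfl⟩, -⟩ := hγ
  exact ⟨a, mem_fiber.mpr ⟨ha, rfl⟩⟩

lemma proj_fiberMean {γ : RS.Qspace J} (hγ : γ ∈ RS.relRoots J) :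
    RS.proj J (RS.fiberMean J γ) = γ := by
  have hcard : ((RS.fiber J γ).card : ℝ) ≠ 0 := by
    exact_mod_cast (fiber_nonempty hγ).card_ne_zero
  rw [fiberMean, map_smul, map_sum, Finset.sum_congr rfl fun x hx => (mem_fiber.mp hx).2,
    Finset.sum_const, ← Nat.cast_smul_eq_nsmul ℝ, smul_smul, inv_mul_cancel₀ hcard, one_smul]

lemma fiberMean_mem_orthogonal (γ : RS.Qspace J) :
    RS.fiberMean J γ ∈ (RS.leviSpan J)ᗮ := by
  refine (Submodule.mem_orthogonal _ _).mpr fun u hu => ?_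
  induction hu using Submodule.span_induction with
  | mem c hc =>
    rw [fiberMean, inner_smul_right, inner_sum, sum_inner_fiber_eq_zero γ hc, mul_zero]
  | zero => exact inner_zero_left _
  | add u w _ _ hu hw => rw [inner_add_left, hu, hw, add_zero]
  | smul t u _ hu => rw [inner_smul_left, hu, mul_zero]

lemma exists_mem_fiber_inner_neg {γ : RS.Qspace J} {b : V}
    (h : ⟪RS.fiberMean J γ, b⟫ < 0) : ∃ x ∈ RS.fiber J γ, ⟪x, b⟫ < 0 := by
  rw [fiberMean, real_inner_smul_left, sum_inner] at h
  have hsum : ∑ x ∈ RS.fiber J γ, ⟪x, b⟫ < ∑ x ∈ RS.fiber J γ, (0 : ℝ) := by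
    rw [Finset.sum_const_zero]
    by_contra! hnn
    exact h.not_ge (mul_nonneg (by positivity) hnn)
  exact Finset.exists_lt_of_sum_lt hsum

lemma neg_mem_relRoots {γ : RS.Qspace J} (hγ : γ ∈ RS.relRoots J) : -γ ∈ RS.relRoots J := by
  obtain ⟨⟨a, ha, rfl⟩, hγ0⟩ := hγ
  exact ⟨⟨-a, RS.neg_mem a ha, map_neg _ a⟩, by simpa using hγ0⟩

lemma add_mem_relRoots_of_inner_neg {γ δ : RS.Qspace J} (hγ : γ ∈ RS.relRoots J)
    (hδ : δ ∈ RS.relRoots J) {v w : V} (hv : v ∈ (RS.leviSpan J)ᗮ) (hvγ : RS.proj J v = γ)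
    (hwδ : RS.proj J w = δ) (hvw : ⟪v, w⟫ < 0) (hne : γ + δ ≠ 0) :
    γ + δ ∈ RS.relRoots J := by
  obtain ⟨⟨b, hb, rfl⟩, -⟩ := hδ
  have hmean : RS.fiberMean J γ = v := eq_of_proj_eq_of_mem_orthogonal
    ((proj_fiberMean hγ).trans hvγ.symm) (fiberMean_mem_orthogonal γ) hv
  have hvb : ⟪v, b⟫ = ⟪v, w⟫ := by
    rw [← sub_eq_zero, ← inner_sub_right]
    exact (Submodule.mem_orthogonal' _ v).mp hv _ (proj_eq_proj_iff.mp hwδ.symm)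
  obtain ⟨x, hx, hxb⟩ := exists_mem_fiber_inner_neg (b := b) (by rwa [hmean, hvb])
  rw [mem_fiber] at hx
  have hproj : RS.proj J (x + b) = γ + RS.proj J b := by rw [map_add, hx.2]
  refine ⟨⟨x + b, RS.add_mem_of_inner_neg hx.1 hb hxb fun h => hne ?_, hproj⟩, hne⟩
  rw [← hproj, h, map_zero]

end RootSystemData

open RootSystemData in
theorem stmt4 {V : Type} [NormedAddCommGroup V] [InnerProductSpace ℝ V]
    (RS : RootSystemData V) (J : Finset V) (hJ : J ⊆ RS.base)
    (α : RS.Qspace J) (hα : α ∈ RS.relRoots J)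
    (β : RS.Qspace J) (hβ : RS.IsSimpleRel J β)
    (hind : ∀ m k : ℤ, m • α + k • β = 0 → m = 0 ∧ k = 0)
    (i j : ℕ) (hi : 1 ≤ i) (hj : 1 ≤ j) (k l : ℤ)
    (hk : (i : ℤ) • α + k • β ∈ RS.relRoots J)
    (hkmax : ∀ k' : ℤ, k < k' → (i : ℤ) • α + k' • β ∉ RS.relRoots J)
    (hl : (j : ℤ) • α + l • β ∈ RS.relRoots J)
    (hlmax : ∀ l' : ℤ, l < l' → (j : ℤ) • α + l' • β ∉ RS.relRoots J) :
    ((j : ℤ) • α + l • β) - ((i : ℤ) • α + k • β) ∈ RS.relRoots J ∨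
      ((j : ℤ) • α + l • β) - ((i : ℤ) • α + k • β) = 0 := by
  obtain ⟨hβ0, b, hbJ, rfl⟩ := hβ
  have hβ : RS.proj J b ∈ RS.relRoots J := ⟨⟨b, RS.base_sub (hJ hbJ), rfl⟩, hβ0⟩
  set vα := RS.fiberMean J α
  set vβ := RS.fiberMean J (RS.proj J b)
  have hlift (m t : ℤ) : (m : ℝ) • vα + (t : ℝ) • vβ ∈ (RS.leviSpan J)ᗮ ∧
      RS.proj J ((m : ℝ) • vα + (t : ℝ) • vβ) = m • α + t • RS.proj J b := by
    refine ⟨Submodule.add_mem _ (Submodule.smul_mem _ _ (fiberMean_mem_orthogonal α))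
      (Submodule.smul_mem _ _ (fiberMean_mem_orthogonal _)), ?_⟩
    rw [map_add, map_smul, map_smul, proj_fiberMean hα, proj_fiberMean hβ,
      Int.cast_smul_eq_zsmul, Int.cast_smul_eq_zsmul]
  have hinner_nonneg (m : ℕ) (t : ℤ) (hm : 1 ≤ m)
      (hmem : (m : ℤ) • α + t • RS.proj J b ∈ RS.relRoots J)
      (hmax : ∀ t' : ℤ, t < t' → (m : ℤ) • α + t' • RS.proj J b ∉ RS.relRoots J) :
      0 ≤ ⟪((m : ℤ) : ℝ) • vα + (t : ℝ) • vβ, vβ⟫ := by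
    have hsucc : (m : ℤ) • α + t • RS.proj J b + RS.proj J b
        = (m : ℤ) • α + (t + 1) • RS.proj J b := by rw [add_zsmul, one_zsmul, add_assoc]
    refine not_lt.mp fun hneg => hmax (t + 1) (lt_add_one t) (hsucc ▸
      add_mem_relRoots_of_inner_neg hmem hβ (hlift m t).1 (hlift m t).2 (proj_fiberMean hβ)
        hneg ?_)
    rw [hsucc]
    intro h0
    have := (hind _ _ h0).1
    omega
  have hne (m t : ℤ) (h : m • α + t • RS.proj J b ∈ RS.relRoots J) :
      (m : ℝ) • vα + (t : ℝ) • vβ ≠ 0 := fun h0 =>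
    h.2 (by rw [← (hlift m t).2, h0, map_zero]; rfl)
  have hpos := inner_smul_add_smul_pos (by exact_mod_cast hi) (by exact_mod_cast hj)
    (hinner_nonneg i k hi hk hkmax) (hinner_nonneg j l hj hl hlmax) (hne _ _ hk) (hne _ _ hl)
  rw [sub_eq_add_neg, or_iff_not_imp_right]
  refine add_mem_relRoots_of_inner_neg hl (neg_mem_relRoots hk) (hlift j l).1 (hlift j l).2
    (by rw [map_neg, (hlift i k).2]) ?_
  rw [inner_neg_right, real_inner_comm]
  linarith
end
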